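/- arXiv:1309.4813 — 7 statements merged into one kernel-verified Lean document; each statement's English description precedes it below -/
import Mathlib

section
/- Let A : ℕ → ℕ → ℝ be an infinite matrix such that (i) the row sums ∑_q A p q converge for each p and tend to 1 as p → ∞, (ii) for each fixed column q, A p q → 0 as p → ∞, and (iii) there is a constant C with ∑_q |A p q| ≤ C for all p. Then for every convergent sequence (s_q) with limit s (for which the series ∑_q A p q * s_q converges for each p), the transformed sequence t_p = ∑_q A p q * s_q converges to s as p → ∞. -/
set_option maxHeartbeats 1000000


open Filter

theorem silverman_toeplitz_sufficiency (A : ℕ → ℕ → ℝ) (C : ℝ)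
    (hrow_summable : ∀ p, Summable fun q => A p q)
    (hrow : Tendsto (fun p => ∑' q, A p q) atTop (nhds 1))
    (hcol : ∀ q, Tendsto (fun p => A p q) atTop (nhds 0))
    (habs : ∀ p, Summable fun q => |A p q|)
    (hbound : ∀ p, (∑' q, |A p q|) ≤ C)
    (s : ℕ → ℝ) (L : ℝ) (hs : Tendsto s atTop (nhds L))
    (hts : ∀ p, Summable fun q => A p q * s q) :
    Tendsto (fun p => ∑' q, A p q * s q) atTop (nhds L) := by
  have hC : 0 ≤ C := le_trans (tsum_nonneg fun q => abs_nonneg _) (hbound 0)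
  set e : ℕ → ℝ := fun q => s q - L with he
  have hsum_e : ∀ p, Summable fun q => A p q * e q := by
    intro p
    have : (fun q => A p q * e q) = fun q => A p q * s q - A p q * L := by
      funext q; simp [he]; ring
    rw [this]
    exact (hts p).sub ((hrow_summable p).mul_right L)
  have key : Tendsto (fun p => ∑' q, A p q * e q) atTop (nhds 0) := by
    rw [Metric.tendsto_atTop]
    intro ε hε
    set ε' : ℝ := ε / (2 * (C + 1)) with hε'
    have hε'pos : 0 < ε' := by positivity
    -- find N with |e q| ≤ ε' for q ≥ N
    have htend : Tendsto e atTop (nhds 0) := by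
      simpa [he] using hs.sub_const L
    obtain ⟨N, hN⟩ := (Metric.tendsto_atTop.1 htend ε' hε'pos)
    have hNe : ∀ q, N ≤ q → |e q| ≤ ε' := by
      intro q hq
      have := hN q hq
      simp [Real.dist_eq] at this
      linarith [this.le]
    -- head tends to 0
    have hhead : Tendsto (fun p => ∑ q ∈ Finset.range N, A p q * e q) atTop (nhds 0) := by
      have := tendsto_finset_sum (Finset.range N)
        (fun q _ => (hcol q).mul_const (e q))
      simpa using this
    obtain ⟨P, hP⟩ := Metric.tendsto_atTop.1 hhead (ε/2) (by positivity)
    refine ⟨P, fun p hp => ?_⟩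
    have hsplit := Summable.sum_add_tsum_nat_add N (hsum_e p)
    -- tail bound
    have htail_sum : Summable fun q => |A p (q + N)| * ε' :=
      (((summable_nat_add_iff N).2 (habs p))).mul_right ε'
    have htail_abs : Summable fun q => |A p (q + N) * e (q + N)| := by
      refine Summable.of_nonneg_of_le (fun q => abs_nonneg _) (fun q => ?_) htail_sum
      rw [abs_mul]
      exact mul_le_mul_of_nonneg_left (hNe _ (Nat.le_add_left N q)) (abs_nonneg _)
    have htail : |∑' q, A p (q + N) * e (q + N)| ≤ C * ε' := by
      calc |∑' q, A p (q + N) * e (q + N)| ≤ ∑' q, |A p (q + N) * e (q + N)| := by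
            have := norm_tsum_le_tsum_norm (f := fun q => A p (q + N) * e (q + N))
              (by simpa only [Real.norm_eq_abs] using htail_abs)
            simpa only [Real.norm_eq_abs] using this
        _ ≤ ∑' q, |A p (q + N)| * ε' := by
            refine Summable.tsum_le_tsum (fun q => ?_) htail_abs htail_sum
            rw [abs_mul]
            exact mul_le_mul_of_nonneg_left (hNe _ (Nat.le_add_left N q)) (abs_nonneg _)
        _ = (∑' q, |A p (q + N)|) * ε' := tsum_mul_right
        _ ≤ (∑' q, |A p q|) * ε' := by
            have hsp := Summable.sum_add_tsum_nat_add N (habs p)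
            have : (∑' q, |A p (q + N)|) ≤ ∑' q, |A p q| := by
              rw [← hsp]
              have : 0 ≤ ∑ q ∈ Finset.range N, |A p q| :=
                Finset.sum_nonneg fun q _ => abs_nonneg _
              linarith
            exact mul_le_mul_of_nonneg_right this hε'pos.le
        _ ≤ C * ε' := mul_le_mul_of_nonneg_right (hbound p) hε'pos.le
    have hCe : C * ε' < ε / 2 := by
      rw [hε', mul_div_assoc']
      rw [div_lt_iff₀ (by positivity)]
      nlinarith
    have hheadp : |∑ q ∈ Finset.range N, A p q * e q| < ε / 2 := by
      have := hP p hp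
      simpa [Real.dist_eq] using this
    rw [Real.dist_eq, sub_zero, ← hsplit]
    calc |(∑ q ∈ Finset.range N, A p q * e q) + ∑' q, A p (q + N) * e (q + N)|
        ≤ |∑ q ∈ Finset.range N, A p q * e q| + |∑' q, A p (q + N) * e (q + N)| := abs_add_le _ _
      _ < ε / 2 + ε / 2 := by
          have := lt_of_le_of_lt htail hCe
          linarith
      _ = ε := by ring
  have h2 : Tendsto (fun p => L * ∑' q, A p q) atTop (nhds (L * 1)) := hrow.const_mul L
  have hfinal := key.add h2
  have heq : (fun p => (∑' q, A p q * e q) + L * ∑' q, A p q)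
      = fun p => ∑' q, A p q * s q := by
    funext p
    have h1 : (∑' q, A p q * e q) = (∑' q, A p q * s q) - ∑' q, A p q * L := by
      rw [← Summable.tsum_sub (hts p) ((hrow_summable p).mul_right L)]
      congr 1; funext q; simp [he]; ring
    have h3 : (∑' q, A p q * L) = (∑' q, A p q) * L := tsum_mul_right
    rw [h1, h3]; ring
  rw [heq] at hfinal
  simpa using hfinal
end

section
/- Let A : ℕ → ℕ → ℝ be an infinite matrix with ∑_q |A p q| < ∞ for each p, such that for every convergent real sequence (s_q) with limit s, the sequence t_p = ∑_q A p q s_q is well-defined and converges to s. Then for each fixed q, A p q → 0 as p → ∞, and ∑_q A p q → 1 as p → ∞. -/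
open Filter

theorem silverman_toeplitz_necessity (A : ℕ → ℕ → ℝ)
    (habs : ∀ p, Summable fun q => |A p q|)
    (hreg : ∀ (s : ℕ → ℝ) (L : ℝ), Tendsto s atTop (nhds L) →
      (∀ p, Summable fun q => A p q * s q) ∧
        Tendsto (fun p => ∑' q, A p q * s q) atTop (nhds L)) :
    (∀ q, Tendsto (fun p => A p q) atTop (nhds 0)) ∧
      Tendsto (fun p => ∑' q, A p q) atTop (nhds 1) := by
  constructor
  · intro q
    have h := hreg (fun n => if n = q then (1:ℝ) else 0) 0
      (tendsto_atTop_of_eventually_const (i₀ := q + 1)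
        (fun n hn => by simp [Nat.ne_of_gt (lt_of_lt_of_le (Nat.lt_succ_self q) hn)]))
    have h2 := h.2
    have : (fun p => ∑' n, A p n * (if n = q then (1:ℝ) else 0)) = fun p => A p q := by
      funext p
      rw [tsum_eq_single q]
      · simp
      · intro b hb; simp [hb]
    rwa [this] at h2
  · have h := hreg (fun _ => (1:ℝ)) 1 tendsto_const_nhds
    simpa using h.2
end

section
/- Let H be a complex Hilbert space and T : H → H a continuous linear operator. Then the numerical range W(T) = { ⟨T x, x⟩ : x ∈ H, ‖x‖ = 1 } is a convex subset of ℂ. -/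
open scoped InnerProductSpace
open Complex ComplexConjugate

/-!
An affine change `T ↦ a • T + b • 1` moves any two points of `W(T)` to `0` and `1`, so it suffices
to show `[0, 1] ⊆ W(T)` when `⟪T p, p⟫ = 0` and `⟪T q, q⟫ = 1` for unit vectors `p, q`. Rotating `q`
by a phase makes the cross term `⟪T p, q⟫ + ⟪T q, p⟫` real; then `⟪T u, u⟫` is real along the
segment `u s = (1 - s) p + s q`, which avoids `0`, and `⟪T u, u⟫ / ‖u‖²` runs continuously from `0`
to `1`, taking every value in between.
-/

section NumericalRange

variable {H : Type*} [NormedAddCommGroup H] [InnerProductSpace ℂ H]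

def numericalRange (T : H →ₗ[ℂ] H) : Set ℂ :=
  {z | ∃ x : H, ‖x‖ = 1 ∧ ⟪T x, x⟫_ℂ = z}

lemma inner_map_self_smul (T : H →ₗ[ℂ] H) (c : ℂ) (x : H) :
    ⟪T (c • x), c • x⟫_ℂ = (‖c‖ ^ 2 : ℝ) * ⟪T x, x⟫_ℂ := by
  rw [map_smul, inner_smul_left, inner_smul_right, ← mul_assoc, ← normSq_eq_conj_mul_self,
    normSq_eq_norm_sq]

lemma inner_map_self_div_norm_sq_mem_numericalRange (T : H →ₗ[ℂ] H) {x : H} (hx : x ≠ 0) :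
    ⟪T x, x⟫_ℂ / (‖x‖ ^ 2 : ℝ) ∈ numericalRange T := by
  have hx' : ‖x‖ ≠ 0 := norm_ne_zero_iff.2 hx
  refine ⟨(‖x‖⁻¹ : ℂ) • x, ?_, ?_⟩
  · rw [norm_smul, norm_inv, norm_real, Real.norm_of_nonneg (norm_nonneg x), inv_mul_cancel₀ hx']
  · rw [inner_map_self_smul, norm_inv, norm_real, Real.norm_of_nonneg (norm_nonneg x)]
    push_cast
    field_simp

lemma numericalRange_smul_add_smul_id (T : H →ₗ[ℂ] H) (a b : ℂ) :
    numericalRange (star a • T + star b • LinearMap.id) =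
      (fun z ↦ a * z + b) '' numericalRange T := by
  ext z
  constructor
  · rintro ⟨x, hx, rfl⟩
    refine ⟨_, ⟨x, hx, rfl⟩, ?_⟩
    simp [inner_self_eq_norm_sq_to_K, hx, mul_comm]
  · rintro ⟨_, ⟨x, hx, rfl⟩, rfl⟩
    refine ⟨x, hx, ?_⟩
    simp [inner_self_eq_norm_sq_to_K, hx, mul_comm]

lemma linearIndependent_pair_of_inner_map_self {T : H →ₗ[ℂ] H} {p q : H} (hp : p ≠ 0)
    (hTp : ⟪T p, p⟫_ℂ = 0) (hTq : ⟪T q, q⟫_ℂ ≠ 0) : LinearIndependent ℂ ![p, q] := by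
  refine LinearIndependent.pair_iff.2 fun a b hab ↦ ?_
  obtain rfl | hb := eq_or_ne b 0
  · simpa [hp] using hab
  · have hq : q = (-(b⁻¹ * a)) • p := by
      rw [← inv_smul_smul₀ hb q, eq_neg_of_add_eq_zero_right hab, smul_neg, smul_smul, neg_smul]
    exact absurd (by rw [hq, inner_map_self_smul, hTp, mul_zero]) hTq

lemma exists_norm_eq_one_im_mul_add_conj_mul_eq_zero (A B : ℂ) :
    ∃ l : ℂ, ‖l‖ = 1 ∧ (l * A + conj l * B).im = 0 := by
  set w := A - conj B
  refine ⟨exp (↑(-arg w) * I), norm_exp_ofReal_mul_I _, ?_⟩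
  have hw : exp (↑(-arg w) * I) * w = ‖w‖ := by
    conv_lhs => rw [← norm_mul_exp_arg_mul_I w]
    rw [mul_left_comm, ← exp_add]
    simp
  have hB : (conj (exp (↑(-arg w) * I)) * B).im = -(exp (↑(-arg w) * I) * conj B).im := by
    rw [← conj_im, map_mul, conj_conj]
  rw [add_im, hB, ← sub_eq_add_neg, ← sub_im, ← mul_sub, hw, ofReal_im]

lemma ofReal_mem_numericalRange_of_inner_add_inner_eq_ofReal {T : H →ₗ[ℂ] H} {p q : H}
    (hp : p ≠ 0) (hq : ‖q‖ = 1) (hTp : ⟪T p, p⟫_ℂ = 0) (hTq : ⟪T q, q⟫_ℂ = 1) {r : ℝ}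
    (hr : ⟪T p, q⟫_ℂ + ⟪T q, p⟫_ℂ = r) {t : ℝ} (ht : t ∈ Set.Icc (0 : ℝ) 1) :
    (t : ℂ) ∈ numericalRange T := by
  set u : ℝ → H := fun s ↦ ((1 - s : ℝ) : ℂ) • p + (s : ℂ) • q
  have hTu : ∀ s, ⟪T (u s), u s⟫_ℂ = ((s ^ 2 + s * (1 - s) * r : ℝ) : ℂ) := fun s ↦ by
    simp only [u, map_add, map_smul, inner_add_left, inner_add_right, inner_smul_left,
      inner_smul_right, conj_ofReal, hTp, hTq]
    push_cast
    linear_combination (s * (1 - s) : ℂ) * hr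
  have hu : ∀ s, u s ≠ 0 := fun s hs ↦ by
    have hpq := linearIndependent_pair_of_inner_map_self hp hTp (hTq ▸ one_ne_zero)
    obtain ⟨h1s, hs0⟩ := LinearIndependent.pair_iff.1 hpq _ _ hs
    rw [ofReal_eq_zero] at h1s hs0
    linarith
  set g : ℝ → ℝ := fun s ↦ (s ^ 2 + s * (1 - s) * r) / ‖u s‖ ^ 2
  have hg : Continuous g := by
    refine Continuous.div (by fun_prop) (by fun_prop) fun s ↦ ?_
    exact pow_ne_zero 2 (norm_ne_zero_iff.2 (hu s))
  obtain ⟨s, -, hs⟩ := intermediate_value_Icc zero_le_one hg.continuousOn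
    (by simpa [g, u, hq] using ht)
  have := inner_map_self_div_norm_sq_mem_numericalRange T (hu s)
  rw [hTu, ← ofReal_div] at this
  exact hs ▸ this

lemma ofReal_mem_numericalRange_of_zero_mem_of_one_mem {T : H →ₗ[ℂ] H}
    (h0 : 0 ∈ numericalRange T) (h1 : 1 ∈ numericalRange T) {t : ℝ}
    (ht : t ∈ Set.Icc (0 : ℝ) 1) : (t : ℂ) ∈ numericalRange T := by
  obtain ⟨p, hp, hTp⟩ := h0
  obtain ⟨q, hq, hTq⟩ := h1
  obtain ⟨l, hl, him⟩ := exists_norm_eq_one_im_mul_add_conj_mul_eq_zero ⟪T p, q⟫_ℂ ⟪T q, p⟫_ℂ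
  refine ofReal_mem_numericalRange_of_inner_add_inner_eq_ofReal (q := l • q)
    (r := (l * ⟪T p, q⟫_ℂ + conj l * ⟪T q, p⟫_ℂ).re) (norm_ne_zero_iff.1 (by simp [hp]))
    (by rw [norm_smul, hl, hq, one_mul]) hTp
    (by rw [inner_map_self_smul, hl, hTq]; norm_num) ?_ ht
  rw [map_smul, inner_smul_left, inner_smul_right]
  exact Complex.ext (by simp) (by simpa using him)

end NumericalRange

theorem toeplitz_hausdorff_general
    {H : Type*} [NormedAddCommGroup H] [InnerProductSpace ℂ H]
    (T : H →L[ℂ] H) :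
    Convex ℝ {z : ℂ | ∃ x : H, ‖x‖ = 1 ∧ ⟪T x, x⟫_ℂ = z} := by
  refine convex_iff_segment_subset.2 fun z₁ hz₁ z₂ hz₂ ↦ ?_
  obtain rfl | hne := eq_or_ne z₁ z₂
  · simpa using hz₁
  rw [segment_eq_image_lineMap]
  rintro _ ⟨t, ht, rfl⟩
  have hd : z₂ - z₁ ≠ 0 := sub_ne_zero.2 hne.symm
  set a := (z₂ - z₁)⁻¹
  set S := star a • (T : H →ₗ[ℂ] H) + star (-(a * z₁)) • LinearMap.id
  have hW : numericalRange S = (fun z ↦ a * z + -(a * z₁)) '' numericalRange (T : H →ₗ[ℂ] H) :=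
    numericalRange_smul_add_smul_id _ _ _
  have h0 : (0 : ℂ) ∈ numericalRange S := hW ▸ ⟨z₁, hz₁, by ring⟩
  have h1 : (1 : ℂ) ∈ numericalRange S := hW ▸ ⟨z₂, hz₂, by
    dsimp only; rw [← mul_neg, ← mul_add, ← sub_eq_add_neg]; exact inv_mul_cancel₀ hd⟩
  obtain ⟨_, ⟨x, hx, rfl⟩, hxt⟩ := hW ▸ ofReal_mem_numericalRange_of_zero_mem_of_one_mem h0 h1 ht
  refine ⟨x, hx, ?_⟩
  rw [AffineMap.lineMap_apply, real_smul, vsub_eq_sub, vadd_eq_add, ← hxt]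
  dsimp only
  rw [ContinuousLinearMap.coe_coe]
  linear_combination (z₁ - ⟪T x, x⟫_ℂ) * inv_mul_cancel₀ hd

theorem toeplitz_hausdorff
    {H : Type*} [NormedAddCommGroup H] [InnerProductSpace ℂ H] [CompleteSpace H]
    (T : H →L[ℂ] H) :
    Convex ℝ {z : ℂ | ∃ x : H, ‖x‖ = 1 ∧ ⟪T x, x⟫_ℂ = z} :=
  toeplitz_hausdorff_general T
end

section
/- Let A be an n × n complex matrix. Then the set W(A) = { x* A x : x ∈ ℂⁿ, ‖x‖ = 1 } is convex. -/
/-!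
An affine change `T ↦ c • (T - z • id)` moves any two points of the numerical range to `1` and `0`,
so it suffices to show that `⟪x, T x⟫ = 1` and `⟪y, T y⟫ = 0` for unit vectors `x`, `y` force
`[0, 1] ⊆ W(T)`. Rotating `y` by a phase makes `⟪x, T y⟫ + ⟪y, T x⟫` real; then the quadratic form
is real along the segment from `y` to `x`, which avoids `0` since `x ≠ -y`, and the intermediate
value theorem applied to the normalized form along it reaches every `t ∈ [0, 1]`.
-/

open scoped InnerProductSpace
open Set

theorem ofReal_smul_add_ofReal_one_sub_smul_ne_zero {F : Type*} [NormedAddCommGroup F]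
    [NormedSpace ℂ F] {x y : F} (hx : ‖x‖ = 1) (hy : ‖y‖ = 1) (hxy : x ≠ -y) {s : ℝ}
    (hs : s ∈ Icc (0 : ℝ) 1) : (s : ℂ) • x + ((1 - s : ℝ) : ℂ) • y ≠ 0 := by
  intro h
  have hnorm := congrArg norm (eq_neg_of_add_eq_zero_left h)
  rw [norm_neg, norm_smul, norm_smul, hx, hy, Complex.norm_real, Complex.norm_real,
    Real.norm_of_nonneg hs.1, Real.norm_of_nonneg (sub_nonneg.2 hs.2)] at hnorm
  have hs : 1 - s = s := by linarith
  rw [hs, ← smul_add, smul_eq_zero, Complex.ofReal_eq_zero] at h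
  rcases h with h0 | hxy'
  · rw [h0] at hs
    norm_num at hs
  · exact hxy (eq_neg_of_add_eq_zero_left hxy')

namespace LinearMap

variable {E : Type*} [NormedAddCommGroup E] [InnerProductSpace ℂ E]

def numericalRange (T : E →ₗ[ℂ] E) : Set ℂ := {z | ∃ x : E, ‖x‖ = 1 ∧ ⟪x, T x⟫_ℂ = z}

variable (T : E →ₗ[ℂ] E)

theorem inner_map_self_smul_add_smul (x y : E) (a b : ℝ) :
    ⟪(a : ℂ) • x + (b : ℂ) • y, T ((a : ℂ) • x + (b : ℂ) • y)⟫_ℂ =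
      a ^ 2 * ⟪x, T x⟫_ℂ + a * b * (⟪x, T y⟫_ℂ + ⟪y, T x⟫_ℂ) + b ^ 2 * ⟪y, T y⟫_ℂ := by
  simp only [map_add, map_smul, inner_add_left, inner_add_right, inner_smul_left,
    inner_smul_right, Complex.conj_ofReal]
  ring

theorem exists_norm_eq_one_im_inner_add_inner_eq_zero (x y : E) :
    ∃ ω : ℂ, ‖ω‖ = 1 ∧ (⟪x, T (ω • y)⟫_ℂ + ⟪ω • y, T x⟫_ℂ).im = 0 := by
  -- the imaginary part to kill is `(ω * δ).im`, and `ω = exp (-i arg δ)` makes `ω * δ = ‖δ‖`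
  set δ := ⟪x, T y⟫_ℂ - (starRingEnd ℂ) ⟪y, T x⟫_ℂ
  refine ⟨Complex.exp (-δ.arg * Complex.I),
    by simpa using Complex.norm_exp_ofReal_mul_I (-δ.arg), ?_⟩
  have hreal : Complex.exp (-δ.arg * Complex.I) * δ = ‖δ‖ := by
    conv_lhs => rw [← Complex.norm_mul_exp_arg_mul_I δ]
    rw [mul_left_comm, ← Complex.exp_add]
    simp
  have him := congrArg Complex.im hreal
  rw [map_smul, inner_smul_right, inner_smul_left]
  simp only [Complex.add_im, Complex.mul_im, Complex.conj_re, Complex.conj_im, δ,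
    Complex.sub_re, Complex.sub_im, Complex.ofReal_im] at him ⊢
  linarith

theorem ofReal_mem_numericalRange_of_inner_eq_one_of_inner_eq_zero {x y : E} (hx : ‖x‖ = 1)
    (hy : ‖y‖ = 1) (hxT : ⟪x, T x⟫_ℂ = 1) (hyT : ⟪y, T y⟫_ℂ = 0)
    (hcross : (⟪x, T y⟫_ℂ + ⟪y, T x⟫_ℂ).im = 0) {t : ℝ} (ht : t ∈ Icc (0 : ℝ) 1) :
    (t : ℂ) ∈ T.numericalRange := by
  obtain ⟨r, hr⟩ : ∃ r : ℝ, ⟪x, T y⟫_ℂ + ⟪y, T x⟫_ℂ = r :=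
    ⟨_, Complex.ext (Complex.ofReal_re _).symm (by simp [hcross])⟩
  set v : ℝ → E := fun s => (s : ℂ) • x + ((1 - s : ℝ) : ℂ) • y
  have hxy : x ≠ -y := by
    rintro rfl
    simp [hyT] at hxT
  have hv : ∀ s ∈ Icc (0 : ℝ) 1, v s ≠ 0 := fun s hs =>
    ofReal_smul_add_ofReal_one_sub_smul_ne_zero hx hy hxy hs
  have hvT : ∀ s, ⟪v s, T (v s)⟫_ℂ = ((s ^ 2 + s * (1 - s) * r : ℝ) : ℂ) := by
    intro s
    rw [inner_map_self_smul_add_smul, hxT, hyT, hr]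
    push_cast
    ring
  set g : ℝ → ℝ := fun s => (s ^ 2 + s * (1 - s) * r) / ‖v s‖ ^ 2
  have hg : ContinuousOn g (Icc 0 1) := ContinuousOn.div (by fun_prop) (by fun_prop)
    fun s hs => pow_ne_zero 2 (norm_ne_zero_iff.2 (hv s hs))
  have hg0 : g 0 = 0 := by simp [g]
  have hg1 : g 1 = 1 := by simp [g, v, hx]
  obtain ⟨s, hs, hgs⟩ := intermediate_value_Icc zero_le_one hg (by rwa [hg0, hg1])
  refine ⟨(‖v s‖ : ℂ)⁻¹ • v s, norm_smul_inv_norm (hv s hs), ?_⟩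
  rw [map_smul, inner_smul_left, inner_smul_right, hvT, ← hgs]
  simp only [g, map_inv₀, Complex.conj_ofReal]
  push_cast
  ring

theorem ofReal_mem_numericalRange_of_zero_mem_of_one_mem (h0 : 0 ∈ T.numericalRange)
    (h1 : 1 ∈ T.numericalRange) {t : ℝ} (ht : t ∈ Icc (0 : ℝ) 1) :
    (t : ℂ) ∈ T.numericalRange := by
  obtain ⟨x, hx, hxT⟩ := h1
  obtain ⟨y, hy, hyT⟩ := h0
  obtain ⟨ω, hω, hcross⟩ := exists_norm_eq_one_im_inner_add_inner_eq_zero T x y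
  refine ofReal_mem_numericalRange_of_inner_eq_one_of_inner_eq_zero T hx
    (by rw [norm_smul, hω, hy, one_mul]) hxT ?_ hcross ht
  rw [map_smul, inner_smul_left, inner_smul_right, hyT, mul_zero, mul_zero]

theorem inner_smul_sub_smul_id_apply (c z : ℂ) {x : E} (hx : ‖x‖ = 1) :
    ⟪x, (c • (T - z • LinearMap.id) : E →ₗ[ℂ] E) x⟫_ℂ = c * (⟪x, T x⟫_ℂ - z) := by
  rw [smul_apply, sub_apply, smul_apply, id_apply, inner_smul_right, inner_sub_right,
    inner_smul_right, inner_self_eq_norm_sq_to_K, hx]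
  simp

theorem numericalRange_smul_sub_smul_id (c z : ℂ) :
    (c • (T - z • LinearMap.id)).numericalRange = (fun w => c * (w - z)) '' T.numericalRange := by
  ext w
  constructor
  · rintro ⟨x, hx, rfl⟩
    exact ⟨_, ⟨x, hx, rfl⟩, (inner_smul_sub_smul_id_apply T c z hx).symm⟩
  · rintro ⟨_, ⟨x, hx, rfl⟩, rfl⟩
    exact ⟨x, hx, inner_smul_sub_smul_id_apply T c z hx⟩

theorem convex_numericalRange : Convex ℝ T.numericalRange := by
  intro z₁ hz₁ z₂ hz₂ a b ha _ hab
  obtain rfl | hne := eq_or_ne z₁ z₂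
  · rwa [← add_smul, hab, one_smul]
  set T' := (z₁ - z₂)⁻¹ • (T - z₂ • LinearMap.id)
  have hmem : ∀ w ∈ T.numericalRange, (z₁ - z₂)⁻¹ * (w - z₂) ∈ T'.numericalRange := by
    intro w hw
    rw [numericalRange_smul_sub_smul_id]
    exact mem_image_of_mem _ hw
  have haT' : (a : ℂ) ∈ T'.numericalRange :=
    ofReal_mem_numericalRange_of_zero_mem_of_one_mem T' (by simpa using hmem _ hz₂)
      (by simpa [sub_ne_zero.2 hne] using hmem _ hz₁) ⟨ha, by linarith⟩
  rw [numericalRange_smul_sub_smul_id] at haT'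
  obtain ⟨w, hw, hwa⟩ := haT'
  convert hw using 1
  rw [Complex.real_smul, Complex.real_smul, eq_sub_of_add_eq' hab, Complex.ofReal_sub,
    Complex.ofReal_one, ← hwa]
  field_simp [sub_ne_zero.2 hne]
  ring

end LinearMap

theorem toeplitz_hausdorff_matrix (n : ℕ) (A : Matrix (Fin n) (Fin n) ℂ) :
    Convex ℝ {z : ℂ | ∃ x : EuclideanSpace ℂ (Fin n), ‖x‖ = 1 ∧
      ⟪x, (Matrix.toEuclideanLin A) x⟫_ℂ = z} :=
  (Matrix.toEuclideanLin A).convex_numericalRange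
end

section
/- Let f : ℝ → ℝ be continuous and 2π-periodic, with real Fourier coefficients, and suppose m ≤ f(φ) ≤ M for all φ. Then for every N and every ξ ∈ ℂ^{N+1} with ∑_{n=0}^N |ξ_n|² = 1, the value ∑_{m',n=0}^N c_{m'-n} ξ_n conj(ξ_{m'}) lies in the interval [m, M], where c_k are the Fourier coefficients of f. -/
/-!
With the trigonometric polynomial `P φ = ∑ ξ_n e^{inφ}`, expanding `|P|²` turns the Toeplitz form
into the average `(2π)⁻¹ ∫ f |P|²`, while orthogonality of the exponentials gives
`(2π)⁻¹ ∫ |P|² = ∑ |ξ_n|² = 1`. So the form is the mean of `f` against a probability density: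
it is real and lies between the bounds of `f`.
-/

open Real Complex

open ComplexConjugate

lemma integral_exp_int_mul_I (k : ℤ) :
    ∫ φ in (0 : ℝ)..(2 * π), exp (k * I * φ) = if k = 0 then (2 * π : ℂ) else 0 := by
  split_ifs with hk
  · simp [hk]
  · have hkI : (k : ℂ) * I ≠ 0 := mul_ne_zero (Int.cast_ne_zero.mpr hk) I_ne_zero
    have hperiod : exp (k * I * (2 * π)) = 1 := by
      simpa [mul_comm, mul_left_comm, mul_assoc] using exp_int_mul_two_pi_mul_I k
    simp [integral_exp_mul_complex hkI, hperiod]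

section TrigPoly

variable {ι : Type*} [Fintype ι] (ν : ι → ℤ) (ξ : ι → ℂ)

noncomputable def trigPoly (φ : ℝ) : ℂ := ∑ n, ξ n * exp (ν n * I * φ)

lemma continuous_trigPoly : Continuous (trigPoly ν ξ) := by
  unfold trigPoly; fun_prop

lemma norm_trigPoly_sq (φ : ℝ) :
    (‖trigPoly ν ξ φ‖ : ℂ) ^ 2 =
      ∑ m, ∑ n, ξ n * conj (ξ m) * exp (-((ν m - ν n : ℤ) : ℂ) * I * φ) := by
  rw [← mul_conj', trigPoly, map_sum, Finset.sum_mul_sum, Finset.sum_comm]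
  refine Finset.sum_congr rfl fun m _ => Finset.sum_congr rfl fun n _ => ?_
  have : -((ν m - ν n : ℤ) : ℂ) * I * φ = ν n * I * φ + conj (ν m * I * φ) := by
    simp [conj_ofReal]; ring
  rw [this, Complex.exp_add, map_mul, ← exp_conj]; ring

lemma integral_mul_norm_trigPoly_sq {g : ℝ → ℂ} (hg : Continuous g) :
    ∫ φ in (0 : ℝ)..(2 * π), g φ * (‖trigPoly ν ξ φ‖ : ℂ) ^ 2 =
      ∑ m, ∑ n, (∫ φ in (0 : ℝ)..(2 * π), g φ * exp (-((ν m - ν n : ℤ) : ℂ) * I * φ)) *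
        ξ n * conj (ξ m) := by
  have hpt : ∀ φ : ℝ, g φ * (‖trigPoly ν ξ φ‖ : ℂ) ^ 2 =
      ∑ m, ∑ n, ξ n * conj (ξ m) * (g φ * exp (-((ν m - ν n : ℤ) : ℂ) * I * φ)) := by
    intro φ
    simp only [norm_trigPoly_sq, Finset.mul_sum]
    exact Finset.sum_congr rfl fun m _ => Finset.sum_congr rfl fun n _ => by ring
  simp_rw [hpt]
  rw [intervalIntegral.integral_finsetSum fun m _ => by
    apply Continuous.intervalIntegrable; fun_prop]
  refine Finset.sum_congr rfl fun m _ => ?_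
  rw [intervalIntegral.integral_finsetSum fun n _ => by
    apply Continuous.intervalIntegrable; fun_prop]
  refine Finset.sum_congr rfl fun n _ => ?_
  rw [intervalIntegral.integral_const_mul]; ring

lemma integral_norm_trigPoly_sq (hν : Function.Injective ν) :
    ∫ φ in (0 : ℝ)..(2 * π), ‖trigPoly ν ξ φ‖ ^ 2 = 2 * π * ∑ n, ‖ξ n‖ ^ 2 := by
  classical
  have hortho : ∀ m n, ∫ φ in (0 : ℝ)..(2 * π), exp (-((ν m - ν n : ℤ) : ℂ) * I * φ) =
      if m = n then (2 * π : ℂ) else 0 := fun m n => by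
    rw [← Int.cast_neg, integral_exp_int_mul_I]
    exact if_congr (by rw [neg_eq_zero, sub_eq_zero, hν.eq_iff]) rfl rfl
  have h := integral_mul_norm_trigPoly_sq ν ξ (g := fun _ => 1) continuous_const
  simp only [one_mul, hortho, ite_mul, zero_mul, Finset.sum_ite_eq, Finset.mem_univ, if_true] at h
  simp only [mul_assoc, mul_conj'] at h
  apply ofReal_injective
  rw [← intervalIntegral.integral_ofReal]
  push_cast
  rw [h, Finset.mul_sum]
  simp only [mul_assoc]

lemma toeplitz_form_eq_integral {f : ℝ → ℝ} (hf : Continuous f) {c : ℤ → ℂ}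
    (hc : ∀ k : ℤ, c k = (1 / (2 * (π : ℂ))) *
      ∫ φ in (0 : ℝ)..(2 * π), (f φ : ℂ) * exp (-(k : ℂ) * I * φ)) :
    ∑ m, ∑ n, c (ν m - ν n) * ξ n * conj (ξ m) =
      ((2 * π)⁻¹ * ∫ φ in (0 : ℝ)..(2 * π), f φ * ‖trigPoly ν ξ φ‖ ^ 2 : ℝ) := by
  have hcoeff : ∀ k : ℤ, ∫ φ in (0 : ℝ)..(2 * π), (f φ : ℂ) * exp (-(k : ℂ) * I * φ) =
      2 * π * c k := fun k => by
    rw [hc k]; field_simp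
  have h := integral_mul_norm_trigPoly_sq ν ξ (continuous_ofReal.comp hf)
  simp only [Function.comp_apply, hcoeff] at h
  rw [ofReal_mul, ← intervalIntegral.integral_ofReal]
  push_cast
  rw [h, Finset.mul_sum]
  refine Finset.sum_congr rfl fun m _ => ?_
  rw [Finset.mul_sum]
  refine Finset.sum_congr rfl fun n _ => ?_
  field_simp

end TrigPoly

lemma integral_mul_weight_mem_Icc {f w : ℝ → ℝ} {a b m M : ℝ} (hab : a ≤ b)
    (hw : IntervalIntegrable w MeasureTheory.volume a b)
    (hfw : IntervalIntegrable (fun x => f x * w x) MeasureTheory.volume a b)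
    (hw0 : ∀ x ∈ Set.Icc a b, 0 ≤ w x) (hbd : ∀ x ∈ Set.Icc a b, m ≤ f x ∧ f x ≤ M) :
    ∫ x in a..b, f x * w x ∈ Set.Icc (m * ∫ x in a..b, w x) (M * ∫ x in a..b, w x) := by
  rw [← intervalIntegral.integral_const_mul, ← intervalIntegral.integral_const_mul]
  exact ⟨intervalIntegral.integral_mono_on hab (hw.const_mul m) hfw fun x hx =>
      mul_le_mul_of_nonneg_right (hbd x hx).1 (hw0 x hx),
    intervalIntegral.integral_mono_on hab hfw (hw.const_mul M) fun x hx =>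
      mul_le_mul_of_nonneg_right (hbd x hx).2 (hw0 x hx)⟩

theorem toeplitz_form_bounds_general
    (f : ℝ → ℝ) (hf : Continuous f)
    (m M : ℝ) (hbd : ∀ φ, m ≤ f φ ∧ f φ ≤ M)
    (c : ℤ → ℂ)
    (hc : ∀ k : ℤ, c k = (1 / (2 * (π : ℂ))) *
      ∫ φ in (0 : ℝ)..(2 * π), (f φ : ℂ) * Complex.exp (-(k : ℂ) * Complex.I * φ))
    (N : ℕ) (ξ : Fin (N + 1) → ℂ)
    (hξ : ∑ n, ‖ξ n‖ ^ 2 = 1) :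
    m ≤ (∑ m' : Fin (N + 1), ∑ n : Fin (N + 1), c (((m' : ℕ) : ℤ) - ((n : ℕ) : ℤ)) * ξ n * (starRingEnd ℂ) (ξ m')).re ∧
      (∑ m' : Fin (N + 1), ∑ n : Fin (N + 1), c (((m' : ℕ) : ℤ) - ((n : ℕ) : ℤ)) * ξ n * (starRingEnd ℂ) (ξ m')).re ≤ M ∧
      (∑ m' : Fin (N + 1), ∑ n : Fin (N + 1), c (((m' : ℕ) : ℤ) - ((n : ℕ) : ℤ)) * ξ n * (starRingEnd ℂ) (ξ m')).im = 0 := by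
  set Q := ∑ m' : Fin (N + 1), ∑ n : Fin (N + 1),
    c (((m' : ℕ) : ℤ) - ((n : ℕ) : ℤ)) * ξ n * (starRingEnd ℂ) (ξ m')
  set P := trigPoly (fun n : Fin (N + 1) => ((n : ℕ) : ℤ)) ξ
  have hπ : 0 < 2 * π := by positivity
  have hP : Continuous fun φ => ‖P φ‖ ^ 2 := (continuous_trigPoly _ ξ).norm.pow 2
  have hnorm : ∫ φ in (0 : ℝ)..(2 * π), ‖P φ‖ ^ 2 = 2 * π := by
    rw [integral_norm_trigPoly_sq _ ξ fun _ _ h => Fin.ext (by exact_mod_cast h), hξ, mul_one]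
  have hQ : Q = ((2 * π)⁻¹ * ∫ φ in (0 : ℝ)..(2 * π), f φ * ‖P φ‖ ^ 2 : ℝ) :=
    toeplitz_form_eq_integral _ ξ hf hc
  have hbounds := integral_mul_weight_mem_Icc hπ.le (hP.intervalIntegrable _ _)
    ((hf.mul hP).intervalIntegrable _ _) (fun _ _ => sq_nonneg _) fun φ _ => hbd φ
  rw [hnorm, Set.mem_Icc, ← le_inv_mul_iff₀' hπ, ← inv_mul_le_iff₀' hπ] at hbounds
  rw [hQ, ofReal_re, ofReal_im]
  exact ⟨hbounds.1, hbounds.2, rfl⟩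

theorem toeplitz_form_bounds
    (f : ℝ → ℝ) (hf : Continuous f) (hper : Function.Periodic f (2 * π))
    (m M : ℝ) (hbd : ∀ φ, m ≤ f φ ∧ f φ ≤ M)
    (c : ℤ → ℂ)
    (hc : ∀ k : ℤ, c k = (1 / (2 * (π : ℂ))) *
      ∫ φ in (0 : ℝ)..(2 * π), (f φ : ℂ) * Complex.exp (-(k : ℂ) * Complex.I * φ))
    (N : ℕ) (ξ : Fin (N + 1) → ℂ)
    (hξ : ∑ n, ‖ξ n‖ ^ 2 = 1) :
    m ≤ (∑ m' : Fin (N + 1), ∑ n : Fin (N + 1), c (((m' : ℕ) : ℤ) - ((n : ℕ) : ℤ)) * ξ n * (starRingEnd ℂ) (ξ m')).re ∧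
      (∑ m' : Fin (N + 1), ∑ n : Fin (N + 1), c (((m' : ℕ) : ℤ) - ((n : ℕ) : ℤ)) * ξ n * (starRingEnd ℂ) (ξ m')).re ≤ M ∧
      (∑ m' : Fin (N + 1), ∑ n : Fin (N + 1), c (((m' : ℕ) : ℤ) - ((n : ℕ) : ℤ)) * ξ n * (starRingEnd ℂ) (ξ m')).im = 0 :=
  toeplitz_form_bounds_general f hf m M hbd c hc N ξ hξ
end

section
/- Let A : ℕ → ℕ → ℝ be a row-finite matrix (for each p only finitely many A p q are nonzero) satisfying the three Toeplitz conditions: row sums tend to 1, each column tends to 0, and ∑_q |A p q| ≤ C uniformly in p. If (s_q) is a bounded sequence and t_p = ∑_q A p q s_q, then limsup_{p→∞} |t_p| ≤ C · sup_q |s_q|; moreover if s_q → 0 then t_p → 0. -/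
open Filter

theorem rowfinite_toeplitz_bounded (A : ℕ → ℕ → ℝ) (C : ℝ)
    (hrowfin : ∀ p, {q | A p q ≠ 0}.Finite)
    (hrow : Tendsto (fun p => ∑' q, A p q) atTop (nhds 1))
    (hcol : ∀ q, Tendsto (fun p => A p q) atTop (nhds 0))
    (hbound : ∀ p, (∑' q, |A p q|) ≤ C)
    (s : ℕ → ℝ) (hs : BddAbove (Set.range fun q => |s q|)) :
    limsup (fun p => |∑' q, A p q * s q|) atTop ≤ C * ⨆ q, |s q| ∧
      (Tendsto s atTop (nhds 0) →
        Tendsto (fun p => ∑' q, A p q * s q) atTop (nhds 0)) := by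
  have hsum : ∀ (p : ℕ) (f : ℕ → ℝ), (∀ q, A p q = 0 → f q = 0) → Summable f := by
    intro p f hf
    apply summable_of_ne_finset_zero (s := (hrowfin p).toFinset)
    intro q hq
    simp only [Set.Finite.mem_toFinset, Set.mem_setOf_eq, not_not] at hq
    exact hf q hq
  have hsumA : ∀ p, Summable (fun q => |A p q|) :=
    fun p => hsum p _ (fun q h => by simp [h])
  have hsumAs : ∀ p, Summable (fun q => A p q * s q) :=
    fun p => hsum p _ (fun q h => by simp [h])
  have hsumAsAbs : ∀ p, Summable (fun q => |A p q * s q|) :=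
    fun p => hsum p _ (fun q h => by simp [h])
  have hsumAM : ∀ p, Summable (fun q => |A p q| * (⨆ q, |s q|)) :=
    fun p => (hsumA p).mul_right _
  have hM : ∀ q, |s q| ≤ ⨆ q, |s q| := fun q => le_ciSup hs q
  have hM0 : 0 ≤ ⨆ q, |s q| := le_trans (abs_nonneg _) (hM 0)
  have hC0 : 0 ≤ C := le_trans (tsum_nonneg (fun q => abs_nonneg _)) (hbound 0)
  have key : ∀ p, |∑' q, A p q * s q| ≤ C * ⨆ q, |s q| := by
    intro p
    have h1 : |∑' q, A p q * s q| ≤ ∑' q, |A p q * s q| := by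
      have := norm_tsum_le_tsum_norm (f := fun q => A p q * s q)
        (by simpa only [Real.norm_eq_abs] using hsumAsAbs p)
      simpa only [Real.norm_eq_abs] using this
    have h2 : (∑' q, |A p q * s q|) ≤ ∑' q, |A p q| * (⨆ q, |s q|) := by
      apply Summable.tsum_le_tsum _ (hsumAsAbs p) (hsumAM p)
      intro q
      rw [abs_mul]
      exact mul_le_mul_of_nonneg_left (hM q) (abs_nonneg _)
    have h3 : (∑' q, |A p q| * (⨆ q, |s q|)) = (∑' q, |A p q|) * (⨆ q, |s q|) :=
      tsum_mul_right
    calc |∑' q, A p q * s q| ≤ (∑' q, |A p q|) * (⨆ q, |s q|) := by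
          rw [← h3]; exact h1.trans h2
      _ ≤ C * ⨆ q, |s q| := mul_le_mul_of_nonneg_right (hbound p) hM0
  constructor
  · apply limsup_le_of_le
    · have hb : IsBoundedUnder (· ≥ ·) atTop (fun p => |∑' q, A p q * s q|) :=
        isBoundedUnder_of ⟨0, fun p => abs_nonneg _⟩
      exact hb.isCoboundedUnder_le
    · exact Eventually.of_forall key
  · intro hs0
    rw [NormedAddCommGroup.tendsto_nhds_zero]
    intro ε hε
    have hδ : 0 < ε / (2 * (C + 1)) := by positivity
    obtain ⟨Q, hQ⟩ := (Metric.tendsto_atTop.mp hs0) (ε / (2 * (C + 1))) hδ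
    have hfin : Tendsto (fun p => ∑ q ∈ Finset.range Q, A p q * s q) atTop (nhds 0) := by
      have := tendsto_finset_sum (Finset.range Q)
        (fun q (_ : q ∈ Finset.range Q) => ((hcol q).mul_const (s q)))
      simpa using this
    rw [NormedAddCommGroup.tendsto_nhds_zero] at hfin
    filter_upwards [hfin (ε / 2) (by positivity)] with p hp
    have hsplit : ∑' q, A p q * s q
        = (∑ q ∈ Finset.range Q, A p q * s q) + ∑' n, A p (n + Q) * s (n + Q) :=
      (Summable.sum_add_tsum_nat_add Q (hsumAs p)).symm
    have htailA : Summable (fun n => |A p (n + Q)|) :=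
      (hsumA p).comp_injective (add_left_injective Q)
    have htailAbs : Summable (fun n => |A p (n + Q) * s (n + Q)|) :=
      (hsumAsAbs p).comp_injective (add_left_injective Q)
    have htailbd : ∑' n, |A p (n + Q)| ≤ C := by
      have heq := Summable.sum_add_tsum_nat_add Q (hsumA p)
      have h0 : (0:ℝ) ≤ ∑ q ∈ Finset.range Q, |A p q| :=
        Finset.sum_nonneg (fun q _ => abs_nonneg _)
      have := hbound p
      linarith
    have hle : ∀ n, |A p (n + Q) * s (n + Q)| ≤ |A p (n + Q)| * (ε / (2 * (C + 1))) := by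
      intro n
      rw [abs_mul]
      have h := hQ (n + Q) (Nat.le_add_left Q n)
      rw [Real.dist_0_eq_abs] at h
      exact mul_le_mul_of_nonneg_left h.le (abs_nonneg _)
    have htail : |∑' n, A p (n + Q) * s (n + Q)| ≤ ε / 2 := by
      have t1 : |∑' n, A p (n + Q) * s (n + Q)| ≤ ∑' n, |A p (n + Q) * s (n + Q)| := by
        have := norm_tsum_le_tsum_norm (f := fun n => A p (n + Q) * s (n + Q))
          (by simpa only [Real.norm_eq_abs] using htailAbs)
        simpa only [Real.norm_eq_abs] using this
      have t2 : (∑' n, |A p (n + Q) * s (n + Q)|)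
          ≤ ∑' n, |A p (n + Q)| * (ε / (2 * (C + 1))) :=
        Summable.tsum_le_tsum hle htailAbs (htailA.mul_right _)
      have t3 : (∑' n, |A p (n + Q)| * (ε / (2 * (C + 1))))
          = (∑' n, |A p (n + Q)|) * (ε / (2 * (C + 1))) := tsum_mul_right
      have t4 : (∑' n, |A p (n + Q)|) * (ε / (2 * (C + 1))) ≤ C * (ε / (2 * (C + 1))) :=
        mul_le_mul_of_nonneg_right htailbd (le_of_lt hδ)
      have t5 : C * (ε / (2 * (C + 1))) ≤ ε / 2 := by
        have heq : (C + 1) * (ε / (2 * (C + 1))) = ε / 2 := by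
          field_simp
        nlinarith [hδ.le]
      linarith [t1, t2, t3 ▸ t2, t4, t5]
    calc ‖∑' q, A p q * s q‖
        ≤ ‖∑ q ∈ Finset.range Q, A p q * s q‖ + ‖∑' n, A p (n + Q) * s (n + Q)‖ := by
          rw [hsplit]; exact norm_add_le _ _
      _ < ε / 2 + ε / 2 := by
          apply add_lt_add_of_lt_of_le hp
          simpa using htail
      _ = ε := by ring
end

section
/- Let H be a complex Hilbert space and T a bounded operator on H. For unit vectors x, y ∈ H and any two points a = ⟨T x, x⟩, b = ⟨T y, y⟩ in W(T) with a ≠ b, and any t ∈ [0,1], there exists a unit vector z in the (complex) span of x and y with ⟨T z, z⟩ = (1-t)·a + t·b. -/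
open scoped InnerProductSpace ComplexConjugate

/-!
Subtracting `a` and dividing by `b - a` (an affine change of the operator) reduces to the case
`⟪T x, x⟫ = 0`, `⟪T y, y⟫ = 1`. Rotating `x` by a unimodular scalar makes the cross term
`⟪T x, y⟫ + ⟪T y, x⟫` real; then `⟪T z, z⟫` is real along the real segment `z = (1 - s) x + s y`,
which avoids `0` because `y ≠ -x`. The Rayleigh quotient `⟪T z, z⟫ / ‖z‖²` is thus a continuous
real function of `s` going from `0` to `1`, and the intermediate value theorem gives `t`.
-/

namespace Complex

theorem exists_norm_eq_one_im_conj_mul_add_mul_eq_zero (p q : ℂ) :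
    ∃ c : ℂ, ‖c‖ = 1 ∧ (conj c * p + c * q).im = 0 := by
  set w := p - conj q
  refine ⟨exp (arg w * I), norm_exp_ofReal_mul_I _, ?_⟩
  set c := exp (arg w * I)
  have hc : conj c * c = 1 := by
    rw [mul_comm, mul_conj, normSq_eq_norm_sq, norm_exp_ofReal_mul_I]; norm_num
  have hw : conj c * w = ‖w‖ := by
    rw [← norm_mul_exp_arg_mul_I w, ← mul_assoc, mul_comm _ (‖w‖ : ℂ), mul_assoc, hc, mul_one,
      norm_mul_exp_arg_mul_I]
  have him : (conj c * p + c * q).im = (conj c * w).im := by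
    simp only [w, mul_sub, sub_im, add_im, ← map_mul, conj_im, mul_im]
    ring
  rw [him, hw, ofReal_im]

end Complex

section

variable {H : Type*} [NormedAddCommGroup H] [InnerProductSpace ℂ H]

theorem ofReal_sub_smul_add_smul_ne_zero {x y : H} (hx : ‖x‖ = 1) (hy : ‖y‖ = 1) (hxy : y ≠ -x)
    (s : ℝ) : ((1 - s : ℝ) : ℂ) • x + (s : ℂ) • y ≠ 0 := by
  intro h
  have hnorm : |1 - s| = |s| := by
    have := congrArg norm (eq_neg_of_add_eq_zero_left h)
    rwa [norm_neg, norm_smul, norm_smul, hx, hy, mul_one, mul_one, Complex.norm_real,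
      Complex.norm_real, Real.norm_eq_abs, Real.norm_eq_abs] at this
  have hs : s = 1 / 2 := by
    rcases abs_eq_abs.mp hnorm with h' | h' <;> linarith
  subst hs
  rw [show (1 - 1 / 2 : ℝ) = 1 / 2 by norm_num, ← smul_add, smul_eq_zero] at h
  exact hxy (eq_neg_of_add_eq_zero_right (h.resolve_left (by norm_num)))

namespace ContinuousLinearMap

theorem inner_map_ofReal_smul_add_ofReal_smul (S : H →L[ℂ] H) (u v : H) (α β : ℝ) :
    ⟪S ((α : ℂ) • u + (β : ℂ) • v), (α : ℂ) • u + (β : ℂ) • v⟫_ℂ =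
      (α : ℂ) ^ 2 * ⟪S u, u⟫_ℂ + α * β * (⟪S u, v⟫_ℂ + ⟪S v, u⟫_ℂ) + (β : ℂ) ^ 2 * ⟪S v, v⟫_ℂ := by
  simp only [map_add, map_smul, inner_add_left, inner_add_right, inner_smul_left,
    inner_smul_right, Complex.conj_ofReal]
  ring

theorem exists_norm_eq_one_im_inner_map_cross_eq_zero (S : H →L[ℂ] H) (x y : H) :
    ∃ c : ℂ, ‖c‖ = 1 ∧ (⟪S (c • x), y⟫_ℂ + ⟪S y, c • x⟫_ℂ).im = 0 := by
  simpa only [map_smul, inner_smul_left, inner_smul_right]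
    using Complex.exists_norm_eq_one_im_conj_mul_add_mul_eq_zero ⟪S x, y⟫_ℂ ⟪S y, x⟫_ℂ

theorem inner_map_inv_norm_smul (S : H →L[ℂ] H) (z : H) :
    ⟪S ((‖z‖⁻¹ : ℂ) • z), (‖z‖⁻¹ : ℂ) • z⟫_ℂ = ⟪S z, z⟫_ℂ / (‖z‖ : ℂ) ^ 2 := by
  simp only [map_smul, inner_smul_left, inner_smul_right, map_inv₀, Complex.conj_ofReal]
  ring

theorem inner_inv_conj_smul_sub_conj_smul_one_apply (T : H →L[ℂ] H) (a d : ℂ) (z : H) :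
    ⟪((conj d)⁻¹ • (T - conj a • 1)) z, z⟫_ℂ = (⟪T z, z⟫_ℂ - a * ⟪z, z⟫_ℂ) / d := by
  simp only [smul_apply, sub_apply, one_apply_eq_self, inner_smul_left, inner_sub_left, map_inv₀,
    Complex.conj_conj]
  ring

theorem exists_norm_eq_one_inner_map_self_eq_of_eq_zero_of_eq_one (S : H →L[ℂ] H) {x y : H}
    (hx : ‖x‖ = 1) (hy : ‖y‖ = 1) (hSx : ⟪S x, x⟫_ℂ = 0) (hSy : ⟪S y, y⟫_ℂ = 1) {t : ℝ}
    (ht : t ∈ Set.Icc (0 : ℝ) 1) :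
    ∃ z ∈ Submodule.span ℂ ({x, y} : Set H), ‖z‖ = 1 ∧ ⟪S z, z⟫_ℂ = t := by
  obtain ⟨c, hc, hcross⟩ := S.exists_norm_eq_one_im_inner_map_cross_eq_zero x y
  set u := c • x
  have hu : ‖u‖ = 1 := by rw [norm_smul, hc, hx, one_mul]
  have hSu : ⟪S u, u⟫_ℂ = 0 := by simp [u, hSx]
  have hyu : y ≠ -u := by
    rintro rfl
    simp [hSu] at hSy
  set γ : ℝ → H := fun s => ((1 - s : ℝ) : ℂ) • u + (s : ℂ) • y
  have hγ : ∀ s, γ s ≠ 0 := ofReal_sub_smul_add_smul_ne_zero hu hy hyu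
  have hreal : ∀ s, (⟪S (γ s), γ s⟫_ℂ).im = 0 := fun s => by
    rw [S.inner_map_ofReal_smul_add_ofReal_smul, hSu, hSy]
    simp [← Complex.ofReal_pow, hcross]
  set f : ℝ → ℝ := fun s => (⟪S (γ s), γ s⟫_ℂ).re / ‖γ s‖ ^ 2
  have hf : Continuous f := by
    exact Continuous.div (by fun_prop) (by fun_prop) fun s => by simp [hγ s]
  have hf0 : f 0 = 0 := by simp [f, γ, hSu]
  have hf1 : f 1 = 1 := by simp [f, γ, hSy, hy]
  obtain ⟨s, -, hs⟩ :=
    intermediate_value_Icc zero_le_one hf.continuousOn (by rwa [hf0, hf1])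
  refine ⟨(‖γ s‖⁻¹ : ℂ) • γ s, ?_, norm_smul_inv_norm (hγ s), ?_⟩
  · have hux : u ∈ Submodule.span ℂ ({x, y} : Set H) :=
      Submodule.smul_mem _ _ (Submodule.subset_span (by simp))
    have hy' : y ∈ Submodule.span ℂ ({x, y} : Set H) := Submodule.subset_span (by simp)
    exact Submodule.smul_mem _ _ (Submodule.add_mem _ (Submodule.smul_mem _ _ hux)
      (Submodule.smul_mem _ _ hy'))
  · rw [inner_map_inv_norm_smul, ← hs, ← Complex.re_add_im ⟪S (γ s), γ s⟫_ℂ, hreal]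
    push_cast [f]
    simp

end ContinuousLinearMap

end

theorem toeplitz_hausdorff_two_dim_general
    {H : Type*} [NormedAddCommGroup H] [InnerProductSpace ℂ H]
    (T : H →L[ℂ] H) (x y : H) (hx : ‖x‖ = 1) (hy : ‖y‖ = 1)
    (hab : ⟪T x, x⟫_ℂ ≠ ⟪T y, y⟫_ℂ) (t : ℝ) (ht : t ∈ Set.Icc (0 : ℝ) 1) :
    ∃ z ∈ Submodule.span ℂ ({x, y} : Set H), ‖z‖ = 1 ∧
      ⟪T z, z⟫_ℂ = ((1 - t : ℝ) : ℂ) * ⟪T x, x⟫_ℂ + (t : ℂ) * ⟪T y, y⟫_ℂ := by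
  set a := ⟪T x, x⟫_ℂ
  set b := ⟪T y, y⟫_ℂ
  have hba : b - a ≠ 0 := sub_ne_zero.mpr hab.symm
  set S := (conj (b - a))⁻¹ • (T - conj a • 1)
  have hS : ∀ z : H, ‖z‖ = 1 → ⟪S z, z⟫_ℂ = (⟪T z, z⟫_ℂ - a) / (b - a) := fun z hz => by
    rw [T.inner_inv_conj_smul_sub_conj_smul_one_apply, inner_self_eq_norm_sq_to_K, hz]
    simp
  obtain ⟨z, hz, hz1, hSz⟩ := S.exists_norm_eq_one_inner_map_self_eq_of_eq_zero_of_eq_one hx hy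
    (by rw [hS x hx, sub_self, zero_div]) (by rw [hS y hy, div_self hba]) ht
  refine ⟨z, hz, hz1, ?_⟩
  rw [hS z hz1, div_eq_iff hba] at hSz
  push_cast
  linear_combination hSz

theorem toeplitz_hausdorff_two_dim
    {H : Type*} [NormedAddCommGroup H] [InnerProductSpace ℂ H] [CompleteSpace H]
    (T : H →L[ℂ] H) (x y : H) (hx : ‖x‖ = 1) (hy : ‖y‖ = 1)
    (hab : ⟪T x, x⟫_ℂ ≠ ⟪T y, y⟫_ℂ) (t : ℝ) (ht : t ∈ Set.Icc (0 : ℝ) 1) :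
    ∃ z ∈ Submodule.span ℂ ({x, y} : Set H), ‖z‖ = 1 ∧
      ⟪T z, z⟫_ℂ = ((1 - t : ℝ) : ℂ) * ⟪T x, x⟫_ℂ + (t : ℂ) * ⟪T y, y⟫_ℂ :=
  toeplitz_hausdorff_two_dim_general T x y hx hy hab t ht
end
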